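/- Let p ≤ 0, δ > 0, c > 0, γ̃ > 1 - δ, and p < q ≤ 1. Suppose h : Ω → (0, 1] is C² on an open Ω ⊆ ℝ^N and its Hessian satisfies D²h ≥ ε h^{1-δ} I for some ε > 0, and D²(K_p ∘ h) ≥ -c h^{p-1+γ̃} I (as symmetric matrices). Then D²(K_q ∘ h) ≥ (ε (q-p)/(1-p) h^{1-δ} - c (1-q)/(1-p) h^{γ̃}) K_q'(h) I, where K_q'(s) = s^{q-1}. -/

import Mathlib

/-- The kernel `K_r`: `K_r(s) = log s` if `r = 0`, `s^r/r` otherwise. -/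
noncomputable def Kfun (r s : ℝ) : ℝ := if r = 0 then Real.log s else s ^ r / r

/-- The (real) Hessian of `f` at `x`, as a bilinear expression. -/
noncomputable def D2 {N : ℕ} (f : EuclideanSpace ℝ (Fin N) → ℝ)
    (x v w : EuclideanSpace ℝ (Fin N)) : ℝ :=
  fderiv ℝ (fderiv ℝ f) x v w

/-!
By the chain rule `D²(K_r ∘ h) = h^{r-1} D²h + (r - 1) h^{r-2} Dh ⊗ Dh`, so the rank-one terms
cancel in the interpolation identity
`(1 - p) D²(K_q ∘ h) = (q - p) h^{q-1} D²h + (1 - q) h^{q-p} D²(K_p ∘ h)`.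
For `p < q ≤ 1` both coefficients are nonnegative, and the two assumed lower bounds combine into
the claimed one.
-/

open Filter Topology

lemma hasDerivAt_Kfun (r : ℝ) {s : ℝ} (hs : 0 < s) : HasDerivAt (Kfun r) (s ^ (r - 1)) s := by
  rcases eq_or_ne r 0 with rfl | hr
  · have hlog := Real.hasDerivAt_log hs.ne'
    rw [← Real.rpow_neg_one, ← zero_sub] at hlog
    exact hlog.congr_of_eventuallyEq (.of_forall fun t => by simp [Kfun])
  · have hpow := (Real.hasDerivAt_rpow_const (p := r) (Or.inl hs.ne')).div_const r
    rw [mul_div_cancel_left₀ _ hr] at hpow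
    exact hpow.congr_of_eventuallyEq (.of_forall fun t => by simp [Kfun, hr])

lemma D2_comp {N : ℕ} {g g' : ℝ → ℝ} {g'' : ℝ} {h : EuclideanSpace ℝ (Fin N) → ℝ}
    {x : EuclideanSpace ℝ (Fin N)} (hh : ContDiffAt ℝ 2 h x)
    (hg : ∀ᶠ y in 𝓝 x, HasDerivAt g (g' (h y)) (h y)) (hg' : HasDerivAt g' g'' (h x))
    (v w : EuclideanSpace ℝ (Fin N)) :
    D2 (fun y => g (h y)) x v w =
      g' (h x) * D2 h x v w + g'' * fderiv ℝ h x v * fderiv ℝ h x w := by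
  have hdiff : ∀ᶠ y in 𝓝 x, DifferentiableAt ℝ h y :=
    (hh.eventually (by simp)).mono fun y hy => hy.differentiableAt two_ne_zero
  have hfderiv : fderiv ℝ (fun y => g (h y)) =ᶠ[𝓝 x] fun y => g' (h y) • fderiv ℝ h y := by
    filter_upwards [hg, hdiff] with y hgy hy
    exact (hgy.comp_hasFDerivAt y hy.hasFDerivAt).fderiv
  have hD2h : HasFDerivAt (fderiv ℝ h) (fderiv ℝ (fderiv ℝ h) x) x :=
    ((hh.fderiv_right le_rfl).differentiableAt one_ne_zero).hasFDerivAt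
  have hg'h : HasFDerivAt (fun y => g' (h y)) (g'' • fderiv ℝ h x) x :=
    hg'.comp_hasFDerivAt x (hh.differentiableAt two_ne_zero).hasFDerivAt
  have hprod : HasFDerivAt (fun y => g' (h y) • fderiv ℝ h y) _ x := hg'h.smul hD2h
  unfold D2
  rw [hfderiv.fderiv_eq, hprod.fderiv]
  simp only [add_apply, smul_apply, ContinuousLinearMap.smulRight_apply, smul_eq_mul]

lemma D2_Kfun_comp {N : ℕ} {h : EuclideanSpace ℝ (Fin N) → ℝ} {x : EuclideanSpace ℝ (Fin N)}
    (hh : ContDiffAt ℝ 2 h x) (hx : 0 < h x) (r : ℝ) (v : EuclideanSpace ℝ (Fin N)) :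
    D2 (fun y => Kfun r (h y)) x v v =
      h x ^ (r - 1) * D2 h x v v + (r - 1) * h x ^ (r - 2) * fderiv ℝ h x v ^ 2 := by
  have hpos : ∀ᶠ y in 𝓝 x, 0 < h y := hh.continuousAt.eventually (lt_mem_nhds hx)
  have hKpp : HasDerivAt (fun s => s ^ (r - 1)) ((r - 1) * h x ^ (r - 2)) (h x) := by
    simpa [sub_sub, one_add_one_eq_two] using
      Real.hasDerivAt_rpow_const (p := r - 1) (Or.inl hx.ne')
  rw [D2_comp hh (hpos.mono fun y hy => hasDerivAt_Kfun r hy) hKpp]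
  ring

lemma Kfun_hessian_interpolation {H : ℝ} (hH : 0 < H) (A L : ℝ) {p : ℝ} (hp : p ≠ 1) (q : ℝ) :
    H ^ (q - 1) * A + (q - 1) * H ^ (q - 2) * L ^ 2 =
      ((q - p) * H ^ (q - 1) * A +
        (1 - q) * H ^ (q - p) * (H ^ (p - 1) * A + (p - 1) * H ^ (p - 2) * L ^ 2)) / (1 - p) := by
  have hp' : 1 - p ≠ 0 := sub_ne_zero.mpr hp.symm
  have e1 : H ^ (q - p) * H ^ (p - 1) = H ^ (q - 1) := by rw [← Real.rpow_add hH]; ring_nf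
  have e2 : H ^ (q - p) * H ^ (p - 2) = H ^ (q - 2) := by rw [← Real.rpow_add hH]; ring_nf
  rw [eq_div_iff hp', ← e1, ← e2]
  ring

theorem stmt4_general {N : ℕ} (Ω : Set (EuclideanSpace ℝ (Fin N))) (hΩ : IsOpen Ω)
    (h : EuclideanSpace ℝ (Fin N) → ℝ) (hC2 : ContDiffOn ℝ 2 h Ω)
    (hpos : ∀ x ∈ Ω, 0 < h x)
    (p q δ c γt ε : ℝ)
    (hpq : p < q) (hq : q ≤ 1)
    (hHess : ∀ x ∈ Ω, ∀ v : EuclideanSpace ℝ (Fin N),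
      ε * (h x) ^ (1 - δ) * ‖v‖ ^ 2 ≤ D2 h x v v)
    (hKp : ∀ x ∈ Ω, ∀ v : EuclideanSpace ℝ (Fin N),
      -c * (h x) ^ (p - 1 + γt) * ‖v‖ ^ 2 ≤ D2 (fun y => Kfun p (h y)) x v v) :
    ∀ x ∈ Ω, ∀ v : EuclideanSpace ℝ (Fin N),
      (ε * (q - p) / (1 - p) * (h x) ^ (1 - δ) - c * (1 - q) / (1 - p) * (h x) ^ γt) *
          (h x) ^ (q - 1) * ‖v‖ ^ 2 ≤ D2 (fun y => Kfun q (h y)) x v v := by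
  intro x hx v
  have hh : ContDiffAt ℝ 2 h x := hC2.contDiffAt (hΩ.mem_nhds hx)
  have hH : 0 < h x := hpos x hx
  have hp : 0 < 1 - p := by linarith
  have hKpx := hKp x hx v
  rw [D2_Kfun_comp hh hH] at hKpx
  rw [D2_Kfun_comp hh hH, Kfun_hessian_interpolation hH _ _ (by linarith : p ≠ 1), le_div_iff₀ hp]
  have hγ : h x ^ (q - p) * h x ^ (p - 1 + γt) = h x ^ γt * h x ^ (q - 1) := by
    rw [← Real.rpow_add hH, ← Real.rpow_add hH]; ring_nf
  calc (ε * (q - p) / (1 - p) * h x ^ (1 - δ) - c * (1 - q) / (1 - p) * h x ^ γt) *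
          h x ^ (q - 1) * ‖v‖ ^ 2 * (1 - p)
      = (q - p) * h x ^ (q - 1) * (ε * h x ^ (1 - δ) * ‖v‖ ^ 2) +
          (1 - q) * h x ^ (q - p) * (-c * h x ^ (p - 1 + γt) * ‖v‖ ^ 2) := by
        field_simp
        linear_combination (1 - q) * c * ‖v‖ ^ 2 * hγ
    _ ≤ _ := by
        have hqp : 0 ≤ q - p := by linarith
        have hq1 : 0 ≤ 1 - q := by linarith
        gcongr
        exact hHess x hx v

/-- Real-Hessian analogue of the `p`-lemma: if `D²h ≥ ε h^{1-δ} I` and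
`D²(K_p∘h) ≥ -c h^{p-1+γ̃} I`, then
`D²(K_q∘h) ≥ (ε (q-p)/(1-p) h^{1-δ} - c (1-q)/(1-p) h^{γ̃}) K_q'(h) I`, with
`K_q'(s) = s^{q-1}`, all inequalities being between quadratic forms. -/
theorem stmt4 {N : ℕ} (Ω : Set (EuclideanSpace ℝ (Fin N))) (hΩ : IsOpen Ω)
    (h : EuclideanSpace ℝ (Fin N) → ℝ) (hC2 : ContDiffOn ℝ 2 h Ω)
    (hpos : ∀ x ∈ Ω, 0 < h x) (hle : ∀ x ∈ Ω, h x ≤ 1)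
    (p q δ c γt ε : ℝ) (hp : p ≤ 0) (hδ : 0 < δ) (hc : 0 < c) (hγt : 1 - δ < γt)
    (hpq : p < q) (hq : q ≤ 1) (hε : 0 < ε)
    (hHess : ∀ x ∈ Ω, ∀ v : EuclideanSpace ℝ (Fin N),
      ε * (h x) ^ (1 - δ) * ‖v‖ ^ 2 ≤ D2 h x v v)
    (hKp : ∀ x ∈ Ω, ∀ v : EuclideanSpace ℝ (Fin N),
      -c * (h x) ^ (p - 1 + γt) * ‖v‖ ^ 2 ≤ D2 (fun y => Kfun p (h y)) x v v) :
    ∀ x ∈ Ω, ∀ v : EuclideanSpace ℝ (Fin N),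
      (ε * (q - p) / (1 - p) * (h x) ^ (1 - δ) - c * (1 - q) / (1 - p) * (h x) ^ γt) *
          (h x) ^ (q - 1) * ‖v‖ ^ 2 ≤ D2 (fun y => Kfun q (h y)) x v v :=
  stmt4_general Ω hΩ h hC2 hpos p q δ c γt ε hpq hq hHess hKp
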